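/- arXiv:1506.07295 — 2 statements merged into one kernel-verified Lean document; each statement's English description precedes it below -/
import Mathlib

section
/- Let G be a locally compact unimodular group, H a closed unimodular subgroup, and K a compact open subgroup of G. Normalize Haar measures so that μ_H(H∩K) = μ_{H\G}(HK) = μ_G(K) = 1. Then for any g ∈ G, μ_{H\G}(HgK) = [H∩K : H∩K∩gKg^{-1}] / [H∩gKg^{-1} : H∩K∩gKg^{-1}]. -/
open MeasureTheory
open Pointwise

theorem measure_subgroup_eq_relIndex_mul
    {X : Type*} [Group X] [TopologicalSpace X] [IsTopologicalGroup X]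
    [MeasurableSpace X] [BorelSpace X]
    (μ : Measure X) [μ.IsMulLeftInvariant]
    (L A : Subgroup X) (hLA : L ≤ A) (hLopen : IsOpen (L : Set X))
    (hAopen : IsOpen (A : Set X)) (hAcomp : IsCompact (A : Set X)) :
    μ (A : Set X) = (L.relIndex A) * μ (L : Set X) := by
  have hAcs : CompactSpace A := isCompact_iff_compactSpace.mp hAcomp
  set S : Subgroup A := L.subgroupOf A with hS
  have hsubopen : IsOpen ((S : Subgroup A) : Set A) := by
    have : ((S : Subgroup A) : Set A) = Subtype.val ⁻¹' (L : Set X) := by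
      ext x; simp [hS, Subgroup.mem_subgroupOf]
    rw [this]
    exact hLopen.preimage continuous_subtype_val
  have hfin : Finite (A ⧸ S) := Subgroup.quotient_finite_of_isOpen _ hsubopen
  classical
  have := Fintype.ofFinite (A ⧸ S)
  set t : (A ⧸ S) → X := fun q => ((Quotient.out q : A) : X) with ht
  have hout : ∀ q : A ⧸ S, QuotientGroup.mk (Quotient.out q) = q := fun q =>
    QuotientGroup.out_eq' q
  have hcover : (A : Set X) = ⋃ q, t q • (L : Set X) := by
    ext x
    simp only [Set.mem_iUnion]
    constructor
    · intro hx
      refine ⟨(QuotientGroup.mk (⟨x, hx⟩ : A) : A ⧸ S), ?_⟩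
      set q : A ⧸ S := QuotientGroup.mk (⟨x, hx⟩ : A) with hq
      have h2 : (Quotient.out q)⁻¹ * (⟨x, hx⟩ : A) ∈ S :=
        QuotientGroup.eq.mp (by rw [hout q, hq])
      have h2' : (t q)⁻¹ * x ∈ (L : Set X) := h2
      refine ⟨(t q)⁻¹ * x, h2', ?_⟩
      simp [smul_eq_mul]
    · rintro ⟨q, y, hy, rfl⟩
      have : t q ∈ A := (Quotient.out q : A).2
      exact A.mul_mem this (hLA hy)
  have hdisj : Pairwise (Function.onFun Disjoint fun q => t q • (L : Set X)) := by
    intro q q' hqq'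
    rw [Function.onFun, Set.disjoint_left]
    rintro z ⟨y, hy, rfl⟩ ⟨y', hy', hz⟩
    apply hqq'
    simp only [smul_eq_mul] at hz
    have h3 : (t q)⁻¹ * t q' = y * y'⁻¹ := by
      rw [inv_mul_eq_iff_eq_mul, ← mul_assoc, ← hz]; group
    have hmemL : (t q)⁻¹ * t q' ∈ L := by
      rw [h3]; exact L.mul_mem hy (L.inv_mem hy')
    have hrel : (Quotient.out q)⁻¹ * (Quotient.out q') ∈ S := hmemL
    have h4 := QuotientGroup.eq.mpr hrel
    rw [hout, hout] at h4
    exact h4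
  have hmeas : ∀ q, MeasurableSet (t q • (L : Set X)) := fun q =>
    (hLopen.smul (t q)).measurableSet
  calc μ (A : Set X) = μ (⋃ q, t q • (L : Set X)) := by rw [hcover]
    _ = ∑' q, μ (t q • (L : Set X)) := measure_iUnion hdisj hmeas
    _ = ∑' _ : (A ⧸ S), μ (L : Set X) := by
        congr 1; ext q
        rw [← measure_preimage_mul μ (t q)⁻¹ (L : Set X)]
        congr 1
        ext z
        simp [Set.mem_smul_set_iff_inv_smul_mem, smul_eq_mul]
    _ = (L.relIndex A) * μ (L : Set X) := by
        rw [tsum_eq_sum (s := Finset.univ) (by simp), Finset.sum_const, nsmul_eq_mul]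
        congr 2
        rw [Subgroup.relIndex, Subgroup.index_eq_card, Nat.card_eq_fintype_card,
          Finset.card_univ]

theorem relIndex_aux_ne_zero
    {X : Type*} [Group X] [TopologicalSpace X] [IsTopologicalGroup X]
    (L A : Subgroup X) (hLopen : IsOpen (L : Set X))
    (hAcomp : IsCompact (A : Set X)) :
    L.relIndex A ≠ 0 := by
  have hAcs : CompactSpace A := isCompact_iff_compactSpace.mp hAcomp
  have hsubopen : IsOpen ((L.subgroupOf A : Subgroup A) : Set A) := by
    have : ((L.subgroupOf A : Subgroup A) : Set A) = Subtype.val ⁻¹' (L : Set X) := by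
      ext x; simp [Subgroup.mem_subgroupOf]
    rw [this]
    exact hLopen.preimage continuous_subtype_val
  have hfin : Finite (A ⧸ L.subgroupOf A) := Subgroup.quotient_finite_of_isOpen _ hsubopen
  rw [Subgroup.relIndex, Subgroup.index_eq_card]
  exact Nat.card_pos.ne'

/-- Let `G` be a locally compact unimodular group, `H` a closed unimodular
subgroup and `K` a compact open subgroup.  Normalize Haar measures so that
`μ_H(H ∩ K) = μ_{H\G}(HK) = μ_G(K) = 1` (the compatibility of the measures is expressed by
Weil's quotient integral formula).  Then for any `g ∈ G`,
`μ_{H\G}(HgK) = [H∩K : H∩K∩gKg⁻¹] / [H∩gKg⁻¹ : H∩K∩gKg⁻¹]`. -/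
theorem local_summability_stmt5
    (G : Type*) [Group G] [TopologicalSpace G] [IsTopologicalGroup G]
    [LocallyCompactSpace G] [MeasurableSpace G] [BorelSpace G]
    (H : Subgroup G) (hHclosed : IsClosed (H : Set G))
    (K : Subgroup G) (hKcomp : IsCompact (K : Set G)) (hKopen : IsOpen (K : Set G))
    (μG : Measure G) [μG.IsHaarMeasure] [μG.IsMulRightInvariant]
    (μH : Measure H) [μH.IsHaarMeasure] [μH.IsMulRightInvariant]
    (ν : Measure (Quotient (QuotientGroup.rightRel H)))
    (hWeil : ∀ f : G → ℝ, Continuous f → HasCompactSupport f →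
      ∃ Fq : Quotient (QuotientGroup.rightRel H) → ℝ,
        (∀ x : G, Fq (Quotient.mk (QuotientGroup.rightRel H) x)
            = ∫ h : H, f ((h : G) * x) ∂μH) ∧
        ∫ x, f x ∂μG = ∫ y, Fq y ∂ν)
    (hμHK : μH ((fun h : H => (h : G)) ⁻¹' (K : Set G)) = 1)
    (hμGK : μG (K : Set G) = 1)
    (hνHK : ν ((Quotient.mk (QuotientGroup.rightRel H)) ''
        {x : G | ∃ h ∈ H, ∃ k ∈ K, x = h * k}) = 1)
    (g : G) :
    (ν ((Quotient.mk (QuotientGroup.rightRel H)) ''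
        {x : G | ∃ h ∈ H, ∃ k ∈ K, x = h * g * k})).toReal
      = ((K.map (MulAut.conj g).toMonoidHom).relIndex (H ⊓ K) : ℝ)
        / (K.relIndex (H ⊓ K.map (MulAut.conj g).toMonoidHom) : ℝ) := by
  classical
  haveI : BorelSpace H := Subtype.borelSpace (H : Set G)
  set Kg : Subgroup G := K.map (MulAut.conj g).toMonoidHom with hKg
  -- basic facts about Kg
  have hKgset : (Kg : Set G) = (fun x => g⁻¹ * x * g) ⁻¹' (K : Set G) := by
    ext y
    simp only [hKg, SetLike.mem_coe, Subgroup.mem_map_equiv, Set.mem_preimage]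
    constructor
    · intro hy; simpa using hy
    · intro hy; simpa using hy
  have hKgopen : IsOpen (Kg : Set G) := by
    rw [hKgset]
    exact hKopen.preimage ((continuous_const.mul continuous_id).mul continuous_const)
  have hKgcomp : IsCompact (Kg : Set G) := by
    have : (Kg : Set G) = (fun x => g * x * g⁻¹) '' (K : Set G) := by
      ext y
      simp only [hKg, SetLike.mem_coe, Subgroup.mem_map, Set.mem_image, MulAut.conj_apply]
      tauto
    rw [this]
    exact hKcomp.image ((continuous_const.mul continuous_id).mul continuous_const)
  have hKclosed : IsClosed (K : Set G) := K.isClosed_of_isOpen hKopen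
  -- subgroups of H
  set A1 : Subgroup H := K.comap H.subtype with hA1
  set A2 : Subgroup H := Kg.comap H.subtype with hA2
  set L : Subgroup H := A1 ⊓ A2 with hL
  have hA1set : (A1 : Set H) = Subtype.val ⁻¹' (K : Set G) := rfl
  have hA2set : (A2 : Set H) = Subtype.val ⁻¹' (Kg : Set G) := rfl
  have hLset : (L : Set H) = (A1 : Set H) ∩ (A2 : Set H) := rfl
  have hA1open : IsOpen (A1 : Set H) := hKopen.preimage continuous_subtype_val
  have hA2open : IsOpen (A2 : Set H) := hKgopen.preimage continuous_subtype_val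
  have hcompat : ∀ (s : Set G), IsCompact s → IsCompact (Subtype.val ⁻¹' s : Set H) := by
    intro s hs
    rw [Topology.IsEmbedding.subtypeVal.isCompact_iff]
    have : Subtype.val '' (Subtype.val ⁻¹' s : Set H) = s ∩ (H : Set G) := by
      rw [Set.image_preimage_eq_inter_range, Subtype.range_coe]
    rw [this]
    exact hs.inter_right hHclosed
  have hA1comp : IsCompact (A1 : Set H) := hcompat _ hKcomp
  have hA2comp : IsCompact (A2 : Set H) := hcompat _ hKgcomp
  have hLopen : IsOpen (L : Set H) := by rw [hLset]; exact hA1open.inter hA2open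
  -- measure index identities
  have e1 := measure_subgroup_eq_relIndex_mul μH L A1 inf_le_left hLopen hA1open hA1comp
  have e2 := measure_subgroup_eq_relIndex_mul μH L A2 inf_le_right hLopen hA2open hA2comp
  have hn1 : L.relIndex A1 = Kg.relIndex (H ⊓ K) := by
    rw [hL, hA1, hA2, ← Subgroup.comap_inf, Subgroup.relIndex_comap,
      Subgroup.map_comap_eq, Subgroup.range_subtype]
    have h1 : (K ⊓ Kg) ⊓ (H ⊓ K) = Kg ⊓ (H ⊓ K) := by
      ext x; simp only [Subgroup.mem_inf]; tauto
    rw [← Subgroup.inf_relIndex_right, h1, Subgroup.inf_relIndex_right]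
  have hn2 : L.relIndex A2 = K.relIndex (H ⊓ Kg) := by
    rw [hL, hA1, hA2, ← Subgroup.comap_inf, Subgroup.relIndex_comap,
      Subgroup.map_comap_eq, Subgroup.range_subtype]
    have h1 : (K ⊓ Kg) ⊓ (H ⊓ Kg) = K ⊓ (H ⊓ Kg) := by
      ext x; simp only [Subgroup.mem_inf]; tauto
    rw [← Subgroup.inf_relIndex_right, h1, Subgroup.inf_relIndex_right]
  have hn1ne : L.relIndex A1 ≠ 0 := relIndex_aux_ne_zero L A1 hLopen hA1comp
  have hn2ne : L.relIndex A2 ≠ 0 := relIndex_aux_ne_zero L A2 hLopen hA2comp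
  have hμA1 : μH (A1 : Set H) = 1 := hμHK
  -- finiteness/positivity of μH L
  have hLclosed : IsClosed (L : Set H) := L.isClosed_of_isOpen hLopen
  have hLcomp : IsCompact (L : Set H) :=
    hA1comp.of_isClosed_subset hLclosed (by rw [hLset]; exact Set.inter_subset_left)
  have hμLfin : μH (L : Set H) ≠ ⊤ := hLcomp.measure_lt_top.ne
  have hμLpos : μH (L : Set H) ≠ 0 := (hLopen.measure_ne_zero μH ⟨1, L.one_mem⟩)
  have hμA2fin : μH (A2 : Set H) ≠ ⊤ := hA2comp.measure_lt_top.ne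
  -- the Weil argument
  set s : Set G := (fun x => g⁻¹ * x) ⁻¹' (K : Set G) with hs
  have hsopen : IsOpen s := hKopen.preimage (continuous_const.mul continuous_id)
  have hsclosed : IsClosed s := hKclosed.preimage (continuous_const.mul continuous_id)
  have hsclopen : IsClopen s := ⟨hsclosed, hsopen⟩
  have hscomp : IsCompact s := by
    have : s = (fun x => g * x) '' (K : Set G) := by
      ext x
      simp only [hs, Set.mem_preimage, Set.mem_image, SetLike.mem_coe]
      constructor
      · intro hx; exact ⟨g⁻¹ * x, hx, by group⟩
      · rintro ⟨k, hk, rfl⟩; simpa using hk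
    rw [this]
    exact hKcomp.image (continuous_const.mul continuous_id)
  set f : G → ℝ := s.indicator (fun _ => (1 : ℝ)) with hf
  have hfc : Continuous f := by
    apply continuous_indicator _ continuous_const.continuousOn
    simp [hsclopen.frontier_eq]
  have hfsupp : HasCompactSupport f :=
    HasCompactSupport.intro hscomp (fun x hx => Set.indicator_of_notMem hx _)
  obtain ⟨Fq, hFq1, hFq2⟩ := hWeil f hfc hfsupp
  have hintG : ∫ x, f x ∂μG = 1 := by
    rw [hf, integral_indicator_const (1 : ℝ) hsopen.measurableSet, smul_eq_mul, mul_one,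
      measureReal_def, hs, measure_preimage_mul μG g⁻¹ (K : Set G), hμGK, ENNReal.toReal_one]
  -- the fiber integral
  set T : Set G := {x : G | ∃ h ∈ H, ∃ k ∈ K, x = h * g * k} with hT
  have hFib : ∀ x : G, Fq (Quotient.mk (QuotientGroup.rightRel H) x)
      = (μH ((fun h : H => (h : G) * x) ⁻¹' s)).toReal := by
    intro x
    rw [hFq1 x]
    have hmeas : MeasurableSet ((fun h : H => (h : G) * x) ⁻¹' s) :=
      (hsopen.preimage (continuous_subtype_val.mul continuous_const)).measurableSet
    have : (fun h : H => f ((h : G) * x))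
        = ((fun h : H => (h : G) * x) ⁻¹' s).indicator (fun _ => (1 : ℝ)) := by
      funext h
      simp only [hf, Set.indicator_apply, Set.mem_preimage]
    rw [this, integral_indicator_const (1 : ℝ) hmeas, smul_eq_mul, mul_one, measureReal_def]
  have hFibT : ∀ x ∈ T, μH ((fun h : H => (h : G) * x) ⁻¹' s) = μH (A2 : Set H) := by
    rintro x ⟨h₀, hh₀, k₀, hk₀, rfl⟩
    have key : (fun h : H => (h : G) * (h₀ * g * k₀)) ⁻¹' s
        = (fun h : H => h * (⟨h₀, hh₀⟩ : H)) ⁻¹' (A2 : Set H) := by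
      ext hh
      simp only [Set.mem_preimage, hs, hA2set, hKgset, SetLike.mem_coe]
      have heq : g⁻¹ * ((hh : G) * (h₀ * g * k₀)) = (g⁻¹ * ((hh : G) * h₀) * g) * k₀ := by
        group
      rw [heq]
      rw [K.mul_mem_cancel_right hk₀]
      rfl
    rw [key, measure_preimage_mul_right μH (⟨h₀, hh₀⟩ : H) (A2 : Set H)]
  have hFibnT : ∀ x ∉ T, (fun h : H => (h : G) * x) ⁻¹' s = (∅ : Set H) := by
    intro x hx
    ext hh
    simp only [Set.mem_preimage, Set.mem_empty_iff_false, iff_false]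
    intro hmem
    apply hx
    refine ⟨(hh : G)⁻¹, H.inv_mem hh.2, g⁻¹ * ((hh : G) * x), hmem, by group⟩
  -- openness and saturation of T
  have hTopen : IsOpen T := by
    rw [isOpen_iff_mem_nhds]
    rintro x ⟨h₀, hh₀, k₀, hk₀, rfl⟩
    have hsub : (h₀ * g * k₀) • (K : Set G) ⊆ T := by
      rintro _ ⟨k', hk', rfl⟩
      exact ⟨h₀, hh₀, k₀ * k', K.mul_mem hk₀ hk', by simp [mul_assoc]⟩
    have hmem : h₀ * g * k₀ ∈ (h₀ * g * k₀) • (K : Set G) :=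
      ⟨1, K.one_mem, mul_one _⟩
    exact Filter.mem_of_superset ((hKopen.smul _).mem_nhds hmem) hsub
  set E : Set (Quotient (QuotientGroup.rightRel H)) :=
    (Quotient.mk (QuotientGroup.rightRel H)) '' T with hE
  have hpre : (Quotient.mk (QuotientGroup.rightRel H)) ⁻¹' E = T := by
    apply Set.Subset.antisymm
    · rintro x hx
      obtain ⟨x', hx'T, hxx'⟩ := hx
      obtain ⟨h₀, hh₀, k₀, hk₀, rfl⟩ := hx'T
      have hrel : x * (h₀ * g * k₀)⁻¹ ∈ H :=
        QuotientGroup.rightRel_apply.mp (Quotient.exact hxx')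
      refine ⟨x * (h₀ * g * k₀)⁻¹ * h₀, H.mul_mem hrel hh₀, k₀, hk₀, by group⟩
    · exact Set.subset_preimage_image _ _
  have hEmeas : MeasurableSet E :=
    measurableSet_quotient.mpr (by rw [hpre]; exact hTopen.measurableSet)
  -- Fq is the indicator of E
  have hFqind : Fq = fun y => E.indicator (fun _ => (μH (A2 : Set H)).toReal) y := by
    funext y
    obtain ⟨x, rfl⟩ := Quotient.exists_rep y
    rw [hFib x]
    by_cases hxT : x ∈ T
    · rw [hFibT x hxT, Set.indicator_of_mem (Set.mem_image_of_mem _ hxT)]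
    · have hnE : Quotient.mk (QuotientGroup.rightRel H) x ∉ E := by
        intro hmem
        exact hxT (hpre ▸ Set.mem_preimage.mpr hmem)
      rw [hFibnT x hxT, Set.indicator_of_notMem hnE]
      simp
  have hint : (ν E).toReal * (μH (A2 : Set H)).toReal = 1 := by
    have := hFq2
    rw [hintG, hFqind, integral_indicator_const _ hEmeas, smul_eq_mul] at this
    exact this.symm
  -- final arithmetic
  set n1 : ℕ := L.relIndex A1 with hn1def
  set n2 : ℕ := L.relIndex A2 with hn2def
  rw [hμA1] at e1
  have hlR : ((μH (L : Set H)).toReal : ℝ) = 1 / (n1 : ℝ) := by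
    have h1 : (1 : ℝ) = (n1 : ℝ) * (μH (L : Set H)).toReal := by
      have := congrArg ENNReal.toReal e1
      rwa [ENNReal.toReal_one, ENNReal.toReal_mul, ENNReal.toReal_natCast] at this
    field_simp at h1 ⊢
    linarith
  have hcR : (μH (A2 : Set H)).toReal = (n2 : ℝ) * (μH (L : Set H)).toReal := by
    have := congrArg ENNReal.toReal e2
    rwa [ENNReal.toReal_mul, ENNReal.toReal_natCast] at this
  have hn1R : (n1 : ℝ) ≠ 0 := Nat.cast_ne_zero.mpr hn1ne
  have hn2R : (n2 : ℝ) ≠ 0 := Nat.cast_ne_zero.mpr hn2ne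
  have hgoal : (ν E).toReal = (n1 : ℝ) / (n2 : ℝ) := by
    rw [hcR, hlR] at hint
    field_simp at hint ⊢
    linarith
  rw [hgoal, hn1, hn2]
end

section
/- Let K be a profinite (compact) group, χ : K → E^× a continuous homomorphism into a non-Archimedean local field E with valuation v, and for r ≥ 0 let K_r = { k ∈ K : v(χ(k) − 1) ≥ r }. Suppose there exist c₁ > 0 and c₂ > 0 such that 1/[K : K_r] ≤ c₁ ⌈r⌉^{c₁} q^{-r/c₂} for all r in (1/e)ℕ. Then for every ε with 0 < ε < 1/c₂, the integral ∫_K |χ(k) − 1|^{-ε} dk is finite, where dk is the normalized Haar measure on K. -/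
open MeasureTheory Pointwise

lemma aux_measure_subgroup_le {K : Type*} [Group K] [TopologicalSpace K]
    [IsTopologicalGroup K] [MeasurableSpace K] [BorelSpace K]
    (μ : Measure K) [μ.IsMulLeftInvariant] (hμ1 : μ Set.univ = 1)
    (H : Subgroup K) (hH : IsClosed (H : Set K)) :
    μ (H : Set K) ≤ ENNReal.ofReal ((H.index : ℝ)⁻¹) := by
  have hmeas : ∀ g : K, MeasurableSet (g • (H : Set K)) :=
    fun g => (hH.smul g).measurableSet
  have hsm : ∀ g : K, μ (g • (H : Set K)) = μ (H : Set K) := fun g => measure_smul (μ := μ) g _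
  have hdisj : ∀ x y : K ⧸ H, x ≠ y →
      Disjoint ((Quotient.out x) • (H : Set K)) ((Quotient.out y) • (H : Set K)) := by
    intro x y hxy
    rw [Set.disjoint_left]
    intro a hax hay
    rw [Set.mem_smul_set_iff_inv_smul_mem, smul_eq_mul, SetLike.mem_coe,
      ← QuotientGroup.eq] at hax hay
    exact hxy (by rw [← QuotientGroup.out_eq' x, ← QuotientGroup.out_eq' y, hax, hay])
  have hcover : Set.univ = ⋃ x : K ⧸ H, (Quotient.out x) • (H : Set K) := by
    ext k
    simp only [Set.mem_univ, true_iff, Set.mem_iUnion]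
    refine ⟨QuotientGroup.mk k, ?_⟩
    rw [Set.mem_smul_set_iff_inv_smul_mem, smul_eq_mul, SetLike.mem_coe, ← QuotientGroup.eq,
      QuotientGroup.out_eq']
  rcases eq_or_ne H.index 0 with h0 | h0
  · suffices hz : μ (H : Set K) = 0 by simp [h0, hz]
    by_contra hne
    have hinf : Infinite (K ⧸ H) := Subgroup.index_eq_zero_iff_infinite.mp h0
    set f := Infinite.natEmbedding (K ⧸ H)
    have htop : (⊤ : ENNReal) ≤ μ Set.univ := by
      calc (⊤ : ENNReal) = ∑' _ : ℕ, μ (H : Set K) :=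
            (ENNReal.tsum_const_eq_top_of_ne_zero hne).symm
        _ = ∑' n : ℕ, μ ((Quotient.out (f n)) • (H : Set K)) := by simp [hsm]
        _ = μ (⋃ n, (Quotient.out (f n)) • (H : Set K)) :=
            (measure_iUnion (fun i j hij => hdisj _ _ (fun h => hij (f.injective h)))
              (fun n => hmeas _)).symm
        _ ≤ μ Set.univ := measure_mono (Set.subset_univ _)
    rw [hμ1] at htop
    exact absurd htop (by norm_num)
  · have hfin : Finite (K ⧸ H) := by
      rw [Subgroup.index_eq_card] at h0
      exact Nat.finite_of_card_ne_zero h0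
    cases nonempty_fintype (K ⧸ H)
    have key : (H.index : ENNReal) * μ (H : Set K) = 1 := by
      rw [← hμ1, hcover, measure_iUnion (fun i j hij => hdisj i j hij) (fun x => hmeas _)]
      rw [tsum_fintype]
      simp only [hsm]
      rw [Finset.sum_const, nsmul_eq_mul]
      congr 1
      simp [Subgroup.index_eq_card, Nat.card_eq_fintype_card]
    have hpos : (0 : ℝ) < (H.index : ℝ) := by
      have := Nat.pos_of_ne_zero h0
      exact_mod_cast this
    rw [ENNReal.ofReal_inv_of_pos hpos, ENNReal.ofReal_natCast,
      ENNReal.le_inv_iff_mul_le, mul_comm, key]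

/-- Let `K` be a compact (profinite) group with normalized Haar measure, `χ` a
continuous homomorphism into a non-Archimedean local field `E` (residue cardinality `q`,
ramification index `e`, with `|x| = q^{-v(x)}`), and for `r ≥ 0` let
`K_r = {k : v(χ(k)−1) ≥ r} = {k : |χ(k)−1| ≤ q^{-r}}`.  If `1/[K:K_r] ≤ c₁ ⌈r⌉^{c₁} q^{-r/c₂}`
for all `r ∈ (1/e)ℕ`, then `∫_K |χ(k)−1|^{-ε} dk < ∞` for every `0 < ε < 1/c₂`. -/
theorem local_summability_stmt8
    (K : Type*) [Group K] [TopologicalSpace K] [IsTopologicalGroup K]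
    [CompactSpace K] [TotallyDisconnectedSpace K] [MeasurableSpace K] [BorelSpace K]
    (μ : Measure K) [μ.IsHaarMeasure] (hμ1 : μ Set.univ = 1)
    (E : Type*) [Field E] [TopologicalSpace E] [IsTopologicalRing E]
    (abv : AbsoluteValue E ℝ) (habv : Continuous fun x => abv x)
    (q : ℕ) (hq : 1 < q) (e : ℕ) (he : 0 < e)
    (χ : K →* E) (hχ : Continuous χ)
    (Kr : ℝ → Subgroup K)
    (hKr : ∀ (r : ℝ) (k : K), k ∈ Kr r ↔ abv (χ k - 1) ≤ (q : ℝ) ^ (-r))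
    (c₁ c₂ : ℝ) (hc₁ : 0 < c₁) (hc₂ : 0 < c₂)
    (hbound : ∀ s : ℕ,
      (((Kr ((s : ℝ) / e)).index : ℝ))⁻¹
        ≤ c₁ * (⌈(s : ℝ) / (e : ℝ)⌉ : ℝ) ^ c₁ * (q : ℝ) ^ (-((s : ℝ) / e) / c₂)) :
    ∀ ε : ℝ, 0 < ε → ε < 1 / c₂ →
      (∫⁻ k, (ENNReal.ofReal (abv (χ k - 1))) ^ (-ε) ∂μ) < ⊤ := by
  intro ε hε hεlt
  have hq1 : (1 : ℝ) < q := by exact_mod_cast hq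
  have hq0 : (0 : ℝ) < q := lt_trans one_pos hq1
  have he0 : (0 : ℝ) < e := by exact_mod_cast he
  have he1 : (1 : ℝ) ≤ e := by exact_mod_cast he
  have hacont : Continuous fun k => abv (χ k - 1) := habv.comp (hχ.sub continuous_const)
  have hKrclosed : ∀ r : ℝ, IsClosed (Kr r : Set K) := by
    intro r
    have : (Kr r : Set K) = (fun k => abv (χ k - 1)) ⁻¹' Set.Iic ((q : ℝ) ^ (-r)) := by
      ext k; simpa using hKr r k
    rw [this]
    exact isClosed_Iic.preimage hacont
  have hKrmeas : ∀ r : ℝ, MeasurableSet (Kr r : Set K) := fun r => (hKrclosed r).measurableSet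
  set S : ℕ → Set K := fun s => (Kr ((s : ℝ) / e) : Set K) with hS
  set b : ℕ → ℝ := fun s => (q : ℝ) ^ (ε * s / e) with hb
  set C : ENNReal := ENNReal.ofReal ((q : ℝ) ^ (ε / e)) with hC
  set d : ℕ → ENNReal := fun s => ENNReal.ofReal (b (s + 1) - b s) with hd
  have hb0 : b 0 = 1 := by simp [hb]
  have hbpos : ∀ s, 0 < b s := fun s => Real.rpow_pos_of_pos hq0 _
  have hbmono : Monotone b := by
    intro s t hst
    apply Real.rpow_le_rpow_of_exponent_le hq1.le
    gcongr
  have hb1le : ∀ s, 1 ≤ b s := fun s => hb0 ▸ hbmono (Nat.zero_le s)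
  have hqe1 : 1 < (q : ℝ) ^ (ε / e) := by
    apply Real.one_lt_rpow_iff_of_pos hq0 |>.mpr
    exact Or.inl ⟨hq1, by positivity⟩
  have hbstep : ∀ s : ℕ, b (s + 1) = b s * (q : ℝ) ^ (ε / e) := by
    intro s
    simp only [hb]
    rw [← Real.rpow_add hq0]
    congr 1
    push_cast
    ring
  have hkey : ∀ t : ℝ, 0 < t → ∀ m : ℝ, (q : ℝ) ^ (-(m / e)) ≤ t →
      t ^ (-ε) ≤ (q : ℝ) ^ (ε * m / e) := by
    intro t ht m hm
    have h1 : ((q : ℝ) ^ (-(m / e))) ^ ε ≤ t ^ ε :=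
      Real.rpow_le_rpow (Real.rpow_nonneg hq0.le _) hm hε.le
    have h2 : ((q : ℝ) ^ (-(m / e))) ^ ε = (q : ℝ) ^ (-(ε * m / e)) := by
      rw [← Real.rpow_mul hq0.le]
      ring_nf
    have h4 : (t ^ ε)⁻¹ ≤ (((q : ℝ) ^ (-(m / e))) ^ ε)⁻¹ :=
      inv_anti₀ (Real.rpow_pos_of_pos (Real.rpow_pos_of_pos hq0 _) ε) h1
    rw [Real.rpow_neg ht.le]
    refine h4.trans ?_
    rw [h2, ← Real.rpow_neg hq0.le, neg_neg]
  have hmemS : ∀ (s : ℕ) (k : K), k ∈ S s ↔ abv (χ k - 1) ≤ (q : ℝ) ^ (-((s : ℝ) / e)) := by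
    intro s k
    rw [hS]
    simp only [SetLike.mem_coe]
    exact hKr _ k
  have hSmeas : ∀ s : ℕ, MeasurableSet (S s) := fun s => hKrmeas _
  set g : K → ENNReal := fun k => C * (1 + ∑' s : ℕ, d s * (S (s + 1)).indicator 1 k) with hg
  have hCne : C ≠ 0 := by
    rw [hC, Ne, ENNReal.ofReal_eq_zero, not_le]
    positivity
  have hCnetop : C ≠ ⊤ := ENNReal.ofReal_ne_top
  have hle : ∀ k, (ENNReal.ofReal (abv (χ k - 1))) ^ (-ε) ≤ g k := by
    intro k
    set t : ℝ := abv (χ k - 1) with ht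
    have ht0 : 0 ≤ t := abv.nonneg _
    rcases eq_or_lt_of_le ht0 with h0 | h0
    · have hLHS : (ENNReal.ofReal t) ^ (-ε) = ⊤ := by
        rw [← h0, ENNReal.ofReal_zero]
        exact ENNReal.zero_rpow_of_neg (by linarith)
      have hindall : ∀ s : ℕ, (S (s + 1)).indicator (1 : K → ENNReal) k = 1 := by
        intro s
        have hk : k ∈ S (s + 1) := (hmemS (s + 1) k).mpr
          (by rw [← ht, ← h0]; exact (Real.rpow_pos_of_pos hq0 _).le)
        rw [Set.indicator_of_mem hk]
        rfl
      have hdtop : ∑' s : ℕ, d s * (S (s + 1)).indicator 1 k = ⊤ := by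
        have hge : ∀ s : ℕ, ENNReal.ofReal ((q : ℝ) ^ (ε / e) - 1) ≤ d s := by
          intro s
          apply ENNReal.ofReal_le_ofReal
          rw [hbstep s]
          nlinarith [hb1le s, hqe1]
        have hc0 : ENNReal.ofReal ((q : ℝ) ^ (ε / e) - 1) ≠ 0 := by
          rw [Ne, ENNReal.ofReal_eq_zero, not_le]
          linarith
        simp only [hindall, mul_one]
        exact top_le_iff.mp ((le_of_eq (ENNReal.tsum_const_eq_top_of_ne_zero hc0).symm).trans
          (ENNReal.tsum_le_tsum hge))
      have hgtop : g k = ⊤ := by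
        simp only [hg]
        rw [hdtop, add_top, ENNReal.mul_top hCne]
      rw [hgtop]
      exact le_top
    · have hindiff : ∀ s : ℕ, k ∈ S (s + 1) ↔ t ≤ (q : ℝ) ^ (-(((s + 1 : ℕ) : ℝ) / e)) :=
        fun s => hmemS (s + 1) k
      have hdc : ∀ s s' : ℕ, s ≤ s' → k ∈ S (s' + 1) → k ∈ S (s + 1) := by
        intro s s' hss hk
        rw [hindiff] at hk ⊢
        refine hk.trans (Real.rpow_le_rpow_of_exponent_le hq1.le ?_)
        have h1 : ((s + 1 : ℕ) : ℝ) ≤ ((s' + 1 : ℕ) : ℝ) := by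
          exact_mod_cast Nat.succ_le_succ hss
        have h2 : ((s + 1 : ℕ) : ℝ) / e ≤ ((s' + 1 : ℕ) : ℝ) / e := by gcongr
        linarith
      by_cases hP0 : k ∈ S 1
      · have hbdd : BddAbove {s : ℕ | k ∈ S (s + 1)} := by
          have hr0 : 0 < (q : ℝ) ^ (-(1 : ℝ) / e) := Real.rpow_pos_of_pos hq0 _
          have hr1 : (q : ℝ) ^ (-(1 : ℝ) / e) < 1 :=
            Real.rpow_lt_one_of_one_lt_of_neg hq1 (by
              apply div_neg_of_neg_of_pos _ he0
              norm_num)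
          have htend : Filter.Tendsto (fun j : ℕ => ((q : ℝ) ^ (-(1 : ℝ) / e)) ^ j)
              Filter.atTop (nhds 0) := tendsto_pow_atTop_nhds_zero_of_lt_one hr0.le hr1
          have hev := htend.eventually_lt_const h0
          obtain ⟨N, hN⟩ := Filter.eventually_atTop.mp hev
          refine ⟨N, fun s hs => ?_⟩
          by_contra hsN
          push_neg at hsN
          have hk := (hindiff s).mp hs
          have heq : (q : ℝ) ^ (-(((s + 1 : ℕ) : ℝ) / e)) = ((q : ℝ) ^ (-(1 : ℝ) / e)) ^ (s + 1) := by
            rw [← Real.rpow_natCast ((q : ℝ) ^ (-(1 : ℝ) / e)) (s + 1), ← Real.rpow_mul hq0.le]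
            congr 1
            push_cast
            ring
          have hlt := hN (s + 1) (by omega)
          rw [heq] at hk
          linarith
        have hPne : {s : ℕ | k ∈ S (s + 1)}.Nonempty := ⟨0, hP0⟩
        set n : ℕ := sSup {s : ℕ | k ∈ S (s + 1)} with hn
        have hnmem : k ∈ S (n + 1) := Nat.sSup_mem hPne hbdd
        have hnot : k ∉ S (n + 2) := by
          intro hk
          have hle' : n + 1 ≤ n := le_csSup hbdd (by exact hk)
          omega
        have hmem_le : ∀ s, s ≤ n → k ∈ S (s + 1) := fun s hs => hdc s n hs hnmem
        have hmem_gt : ∀ s, n < s → k ∉ S (s + 1) := by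
          intro s hs hk
          have : s ≤ n := le_csSup hbdd hk
          omega
        have hts : ∑' s : ℕ, d s * (S (s + 1)).indicator 1 k
            = ∑ s ∈ Finset.range (n + 1), d s := by
          rw [tsum_eq_sum (s := Finset.range (n + 1))
            (fun s hs => by
              rw [Set.indicator_of_notMem (hmem_gt s (by simpa using Finset.mem_range.not.mp hs)),
                mul_zero])]
          refine Finset.sum_congr rfl fun s hs => ?_
          rw [Set.indicator_of_mem (hmem_le s (Nat.lt_succ_iff.mp (Finset.mem_range.mp hs)))]
          simp
        have hsum : ∑ s ∈ Finset.range (n + 1), d s = ENNReal.ofReal (b (n + 1) - 1) := by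
          simp only [hd]
          rw [← ENNReal.ofReal_sum_of_nonneg fun i _ => sub_nonneg.mpr (hbmono (Nat.le_succ i))]
          rw [Finset.sum_range_sub b (n + 1), hb0]
        have hone : (1 : ENNReal) + ENNReal.ofReal (b (n + 1) - 1)
            = ENNReal.ofReal (b (n + 1)) := by
          rw [← ENNReal.ofReal_one,
            ← ENNReal.ofReal_add zero_le_one (by linarith [hb1le (n + 1)])]
          norm_num
        have hgk : g k = ENNReal.ofReal ((q : ℝ) ^ (ε / e) * b (n + 1)) := by
          simp only [hg]
          rw [hts, hsum, hone, hC, ← ENNReal.ofReal_mul (Real.rpow_nonneg hq0.le _)]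
        rw [hgk, ENNReal.ofReal_rpow_of_pos h0]
        apply ENNReal.ofReal_le_ofReal
        have hq' : (q : ℝ) ^ (-(((n + 2 : ℕ) : ℝ) / e)) ≤ t := by
          have hnle : ¬ t ≤ (q : ℝ) ^ (-(((n + 2 : ℕ) : ℝ) / e)) := fun h =>
            hnot ((hmemS (n + 2) k).mpr (by rw [← ht]; exact h))
          linarith [not_le.mp hnle]
        refine (hkey t h0 ((n + 2 : ℕ) : ℝ) hq').trans (le_of_eq ?_)
        simp only [hb]
        rw [← Real.rpow_add hq0]
        congr 1
        push_cast
        ring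
      · have hne : ∀ s : ℕ, k ∉ S (s + 1) := fun s hk => hP0 (hdc 0 s (Nat.zero_le s) hk)
        have hzero : ∑' s : ℕ, d s * (S (s + 1)).indicator 1 k = 0 := by
          have hterm0 : ∀ s : ℕ, d s * (S (s + 1)).indicator (1 : K → ENNReal) k = 0 :=
            fun s => by rw [Set.indicator_of_notMem (hne s), mul_zero]
          simp only [hterm0, tsum_zero]
        have hgk : g k = C := by
          simp only [hg]
          rw [hzero, add_zero, mul_one]
        rw [hgk, ENNReal.ofReal_rpow_of_pos h0, hC]
        apply ENNReal.ofReal_le_ofReal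
        have hq' : (q : ℝ) ^ (-((1 : ℝ) / e)) ≤ t := by
          have h1 : ¬ t ≤ (q : ℝ) ^ (-(((1 : ℕ) : ℝ) / e)) := fun h =>
            hP0 ((hmemS 1 k).mpr (by rw [← ht]; exact h))
          push_cast at h1
          linarith [not_le.mp h1]
        have h2 := hkey t h0 1 hq'
        calc t ^ (-ε) ≤ (q : ℝ) ^ (ε * 1 / e) := h2
          _ = (q : ℝ) ^ (ε / e) := by rw [mul_one]
  have hgint : ∫⁻ k, g k ∂μ = C * (1 + ∑' s : ℕ, d s * μ (S (s + 1))) := by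
    simp only [hg]
    rw [lintegral_const_mul' C _ hCnetop]
    congr 1
    rw [lintegral_add_left measurable_const]
    congr 1
    · rw [lintegral_one, hμ1]
    · rw [lintegral_tsum (f := fun s a => d s * (S (s + 1)).indicator 1 a) fun s =>
        ((measurable_const.indicator (hSmeas (s + 1))).const_mul (d s)).aemeasurable]
      congr 1
      ext s
      rw [lintegral_const_mul (d s) ((measurable_one).indicator (hSmeas (s + 1))),
        lintegral_indicator_one (hSmeas (s + 1))]
  have hfin : ∑' s : ℕ, d s * μ (S (s + 1)) < ⊤ := by
    set m : ℕ := ⌈c₁⌉₊ with hm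
    set R : ℝ := (q : ℝ) ^ ((ε - 1 / c₂) / e) with hR
    have hR0 : 0 < R := Real.rpow_pos_of_pos hq0 _
    have hR1 : R < 1 := by
      apply Real.rpow_lt_one_of_one_lt_of_neg hq1
      apply div_neg_of_neg_of_pos _ he0
      have h1c : ε < 1 / c₂ := hεlt
      linarith
    set u : ℕ → ℝ := fun s => b (s + 1) *
      (c₁ * (⌈((s + 1 : ℕ) : ℝ) / (e : ℝ)⌉ : ℝ) ^ c₁ *
        (q : ℝ) ^ (-(((s + 1 : ℕ) : ℝ) / e) / c₂)) with hu
    have hceil1 : ∀ s : ℕ, (1 : ℝ) ≤ (⌈((s + 1 : ℕ) : ℝ) / (e : ℝ)⌉ : ℝ) := by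
      intro s
      have h1 : (0 : ℝ) < ((s + 1 : ℕ) : ℝ) / e := by positivity
      exact_mod_cast Int.one_le_ceil_iff.mpr h1
    have hu0 : ∀ s, 0 ≤ u s := by
      intro s
      have h2 : (0 : ℝ) ≤ (⌈((s + 1 : ℕ) : ℝ) / (e : ℝ)⌉ : ℝ) ^ c₁ :=
        Real.rpow_nonneg (by linarith [hceil1 s]) _
      have h3 : (0 : ℝ) ≤ (q : ℝ) ^ (-(((s + 1 : ℕ) : ℝ) / e) / c₂) :=
        (Real.rpow_pos_of_pos hq0 _).le
      exact mul_nonneg (hbpos (s + 1)).le (mul_nonneg (mul_nonneg hc₁.le h2) h3)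
    have hterm : ∀ s : ℕ, d s * μ (S (s + 1)) ≤ ENNReal.ofReal (u s) := by
      intro s
      have h1 : d s ≤ ENNReal.ofReal (b (s + 1)) := by
        simp only [hd]
        exact ENNReal.ofReal_le_ofReal (by linarith [hbpos s])
      have h2 : μ (S (s + 1)) ≤ ENNReal.ofReal
          (c₁ * (⌈((s + 1 : ℕ) : ℝ) / (e : ℝ)⌉ : ℝ) ^ c₁ *
            (q : ℝ) ^ (-(((s + 1 : ℕ) : ℝ) / e) / c₂)) := by
        refine le_trans ?_ (ENNReal.ofReal_le_ofReal (hbound (s + 1)))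
        exact aux_measure_subgroup_le μ hμ1 _ (hKrclosed _)
      calc d s * μ (S (s + 1)) ≤ ENNReal.ofReal (b (s + 1)) * ENNReal.ofReal
            (c₁ * (⌈((s + 1 : ℕ) : ℝ) / (e : ℝ)⌉ : ℝ) ^ c₁ *
              (q : ℝ) ^ (-(((s + 1 : ℕ) : ℝ) / e) / c₂)) := mul_le_mul' h1 h2
        _ = ENNReal.ofReal (u s) := (ENNReal.ofReal_mul (hbpos (s + 1)).le).symm
    have hpow : ∀ s : ℕ, b (s + 1) * (q : ℝ) ^ (-(((s + 1 : ℕ) : ℝ) / e) / c₂)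
        = R ^ (s + 1) := by
      intro s
      simp only [hb, hR]
      rw [← Real.rpow_add hq0, ← Real.rpow_natCast ((q : ℝ) ^ ((ε - 1 / c₂) / ↑e)) (s + 1),
        ← Real.rpow_mul hq0.le]
      congr 1
      push_cast
      field_simp
      ring
    have hmaj : Summable (fun s : ℕ => c₁ * (((s + 1 : ℕ) : ℝ)) ^ m * R ^ (s + 1)) := by
      have h0 : Summable (fun n : ℕ => (n : ℝ) ^ m * R ^ n) :=
        summable_pow_mul_geometric_of_norm_lt_one m
          (by rw [Real.norm_eq_abs, abs_of_pos hR0]; exact hR1)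
      have h1 : Summable (fun n : ℕ => (((n + 1 : ℕ)) : ℝ) ^ m * R ^ (n + 1)) :=
        (summable_nat_add_iff (f := fun n : ℕ => (n : ℝ) ^ m * R ^ n) 1).2 h0
      simpa [mul_assoc] using h1.mul_left c₁
    have husum : Summable u := by
      refine Summable.of_nonneg_of_le hu0 (fun s => ?_) hmaj
      have hx1 : (⌈((s + 1 : ℕ) : ℝ) / (e : ℝ)⌉ : ℝ) ≤ ((s + 1 : ℕ) : ℝ) := by
        have hd1 : ((s + 1 : ℕ) : ℝ) / (e : ℝ) ≤ ((s + 1 : ℕ) : ℝ) :=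
          div_le_self (by positivity) he1
        calc (⌈((s + 1 : ℕ) : ℝ) / (e : ℝ)⌉ : ℝ) ≤ (⌈((s + 1 : ℕ) : ℝ)⌉ : ℝ) := by
              exact_mod_cast Int.ceil_le_ceil hd1
          _ = ((s + 1 : ℕ) : ℝ) := by rw [Int.ceil_natCast]; simp
      have hcle : (⌈((s + 1 : ℕ) : ℝ) / (e : ℝ)⌉ : ℝ) ^ c₁ ≤ (((s + 1 : ℕ) : ℝ)) ^ (m : ℕ) := by
        calc (⌈((s + 1 : ℕ) : ℝ) / (e : ℝ)⌉ : ℝ) ^ c₁ ≤ (((s + 1 : ℕ) : ℝ)) ^ c₁ :=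
              Real.rpow_le_rpow (by linarith [hceil1 s]) hx1 hc₁.le
          _ ≤ (((s + 1 : ℕ) : ℝ)) ^ ((m : ℕ) : ℝ) :=
              Real.rpow_le_rpow_of_exponent_le
                (by exact_mod_cast Nat.succ_le_succ (Nat.zero_le s)) (Nat.le_ceil c₁)
          _ = (((s + 1 : ℕ) : ℝ)) ^ (m : ℕ) := Real.rpow_natCast _ m
      have hueq : u s = c₁ * (⌈((s + 1 : ℕ) : ℝ) / (e : ℝ)⌉ : ℝ) ^ c₁ * R ^ (s + 1) := by
        simp only [hu]
        rw [← hpow s]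
        ring
      rw [hueq]
      have hRn : (0 : ℝ) ≤ R ^ (s + 1) := (pow_pos hR0 _).le
      exact mul_le_mul_of_nonneg_right (mul_le_mul_of_nonneg_left hcle hc₁.le) hRn
    calc ∑' s : ℕ, d s * μ (S (s + 1)) ≤ ∑' s : ℕ, ENNReal.ofReal (u s) :=
          ENNReal.tsum_le_tsum hterm
      _ = ENNReal.ofReal (∑' s, u s) := (ENNReal.ofReal_tsum_of_nonneg hu0 husum).symm
      _ < ⊤ := ENNReal.ofReal_lt_top
  calc ∫⁻ k, (ENNReal.ofReal (abv (χ k - 1))) ^ (-ε) ∂μ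
      ≤ ∫⁻ k, g k ∂μ := lintegral_mono hle
    _ = C * (1 + ∑' s : ℕ, d s * μ (S (s + 1))) := hgint
    _ < ⊤ := by
        apply ENNReal.mul_lt_top hCnetop.lt_top
        exact ENNReal.add_lt_top.mpr ⟨ENNReal.one_lt_top, hfin⟩
end
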